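/- arXiv:2207.07832 — 7 statements merged into one kernel-verified Lean document; each statement's English description precedes it below -/
import Mathlib

section
/- Let a ≤ b be real numbers and let h : ℝ → ℝ be differentiable on [0,1]. Suppose that for every ε > 0 there exists a function N : ℝ → ℝ that is differentiable on [0,1] with a ≤ N'(x) ≤ b for all x ∈ [0,1] and |N(x) − h(x)| < ε for all x ∈ [0,1]. Then the set {x ∈ [0,1] : h'(x) < a or h'(x) > b} has Lebesgue measure zero. -/
/-- If `h` is differentiable on `[0,1]` and for every `ε > 0` there is a
function `N`, differentiable on `[0,1]` with derivative in `[a,b]` on `[0,1]`, that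
uniformly approximates `h` on `[0,1]` to accuracy `ε`, then the set of points of `[0,1]`
where `h' < a` or `h' > b` has Lebesgue measure zero. -/
theorem stmt_0 (a b : ℝ) (hab : a ≤ b) (h : ℝ → ℝ)
    (hh : DifferentiableOn ℝ h (Set.Icc 0 1))
    (happrox : ∀ ε : ℝ, 0 < ε → ∃ N : ℝ → ℝ,
      DifferentiableOn ℝ N (Set.Icc 0 1) ∧
      (∀ x ∈ Set.Icc (0 : ℝ) 1,
        a ≤ derivWithin N (Set.Icc 0 1) x ∧ derivWithin N (Set.Icc 0 1) x ≤ b) ∧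
      (∀ x ∈ Set.Icc (0 : ℝ) 1, |N x - h x| < ε)) :
    MeasureTheory.volume
      {x ∈ Set.Icc (0 : ℝ) 1 |
        derivWithin h (Set.Icc 0 1) x < a ∨ b < derivWithin h (Set.Icc 0 1) x} = 0 := by
  -- Key inequality: a*(y-x) ≤ h y - h x ≤ b*(y-x) for x ≤ y in [0,1].
  have key : ∀ x ∈ Set.Icc (0:ℝ) 1, ∀ y ∈ Set.Icc (0:ℝ) 1, x ≤ y →
      a * (y - x) ≤ h y - h x ∧ h y - h x ≤ b * (y - x) := by
    intro x hx y hy hxy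
    constructor
    · apply le_of_forall_pos_le_add
      intro ε hε
      obtain ⟨N, hNd, hNder, hNa⟩ := happrox (ε/2) (by positivity)
      have hNd' : DifferentiableOn ℝ N (interior (Set.Icc (0:ℝ) 1)) := by
        rw [interior_Icc]
        exact hNd.mono Set.Ioo_subset_Icc_self
      have hder : ∀ z ∈ interior (Set.Icc (0:ℝ) 1), a ≤ deriv N z := by
        rw [interior_Icc]
        intro z hz
        have hmem : Set.Icc (0:ℝ) 1 ∈ nhds z :=
          Filter.mem_of_superset (isOpen_Ioo.mem_nhds hz) Set.Ioo_subset_Icc_self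
        have := (hNder z (Set.Ioo_subset_Icc_self hz)).1
        rwa [derivWithin_of_mem_nhds hmem] at this
      have hMVT := (convex_Icc (0:ℝ) 1).mul_sub_le_image_sub_of_le_deriv
        hNd.continuousOn hNd' hder x hx y hy hxy
      have h1 := abs_lt.mp (hNa x hx)
      have h2 := abs_lt.mp (hNa y hy)
      linarith [h1.1, h1.2, h2.1, h2.2]
    · rw [← sub_nonneg]
      apply le_of_forall_pos_le_add
      intro ε hε
      obtain ⟨N, hNd, hNder, hNa⟩ := happrox (ε/2) (by positivity)
      have hNd' : DifferentiableOn ℝ N (interior (Set.Icc (0:ℝ) 1)) := by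
        rw [interior_Icc]
        exact hNd.mono Set.Ioo_subset_Icc_self
      have hder : ∀ z ∈ interior (Set.Icc (0:ℝ) 1), deriv N z ≤ b := by
        rw [interior_Icc]
        intro z hz
        have hmem : Set.Icc (0:ℝ) 1 ∈ nhds z :=
          Filter.mem_of_superset (isOpen_Ioo.mem_nhds hz) Set.Ioo_subset_Icc_self
        have := (hNder z (Set.Ioo_subset_Icc_self hz)).2
        rwa [derivWithin_of_mem_nhds hmem] at this
      have hMVT := (convex_Icc (0:ℝ) 1).image_sub_le_mul_sub_of_deriv_le
        hNd.continuousOn hNd' hder x hx y hy hxy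
      have h1 := abs_lt.mp (hNa x hx)
      have h2 := abs_lt.mp (hNa y hy)
      linarith [h1.1, h1.2, h2.1, h2.2]
  -- Slope bounds
  have slope_bd : ∀ x ∈ Set.Icc (0:ℝ) 1, ∀ y ∈ Set.Icc (0:ℝ) 1 \ {x},
      a ≤ slope h x y ∧ slope h x y ≤ b := by
    intro x hx y hy
    have hyI := hy.1
    have hne : y ≠ x := hy.2
    rcases lt_or_gt_of_ne hne with hlt | hgt
    · have hk := key y hyI x hx hlt.le
      have hpos : (0:ℝ) < x - y := by linarith
      rw [slope_comm]
      unfold slope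
      simp only [vsub_eq_sub]
      rw [smul_eq_mul, ← div_eq_inv_mul]
      constructor
      · rw [le_div_iff₀ hpos]
        linarith [hk.1]
      · rw [div_le_iff₀ hpos]
        linarith [hk.2]
    · have hk := key x hx y hyI hgt.le
      have hpos : (0:ℝ) < y - x := by linarith
      unfold slope
      simp only [vsub_eq_sub]
      rw [smul_eq_mul, ← div_eq_inv_mul]
      constructor
      · rw [le_div_iff₀ hpos]
        linarith [hk.1]
      · rw [div_le_iff₀ hpos]
        linarith [hk.2]
  -- The bad set is empty.
  have hempty : {x ∈ Set.Icc (0:ℝ) 1 |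
      derivWithin h (Set.Icc 0 1) x < a ∨ b < derivWithin h (Set.Icc 0 1) x} = ∅ := by
    apply Set.eq_empty_iff_forall_notMem.mpr
    rintro x ⟨hx, hbad⟩
    have hD : HasDerivWithinAt h (derivWithin h (Set.Icc 0 1) x) (Set.Icc 0 1) x :=
      (hh x hx).hasDerivWithinAt
    have htend := hasDerivWithinAt_iff_tendsto_slope.mp hD
    have hNB : (nhdsWithin x (Set.Icc (0:ℝ) 1 \ {x})).NeBot := by
      rcases lt_or_eq_of_le hx.2 with hx1 | hx1
      · have hsub : Set.Ioo x 1 ⊆ Set.Icc (0:ℝ) 1 \ {x} := by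
          rintro z ⟨hz1, hz2⟩
          exact ⟨⟨le_trans hx.1 hz1.le, hz2.le⟩, ne_of_gt hz1⟩
        have hcl : x ∈ closure (Set.Ioo x 1) := by
          rw [closure_Ioo (ne_of_lt hx1)]
          exact ⟨le_refl x, hx1.le⟩
        have := mem_closure_iff_nhdsWithin_neBot.mp hcl
        exact this.mono (nhdsWithin_mono x hsub)
      · have hx0 : (0:ℝ) < x := by rw [hx1]; norm_num
        have hsub : Set.Ioo (0:ℝ) x ⊆ Set.Icc (0:ℝ) 1 \ {x} := by
          rintro z ⟨hz1, hz2⟩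
          exact ⟨⟨hz1.le, le_trans hz2.le hx.2⟩, ne_of_lt hz2⟩
        have hcl : x ∈ closure (Set.Ioo (0:ℝ) x) := by
          rw [closure_Ioo (ne_of_lt hx0)]
          exact ⟨hx0.le, le_refl x⟩
        have := mem_closure_iff_nhdsWithin_neBot.mp hcl
        exact this.mono (nhdsWithin_mono x hsub)
    have hev : ∀ᶠ y in nhdsWithin x (Set.Icc (0:ℝ) 1 \ {x}),
        a ≤ slope h x y ∧ slope h x y ≤ b :=
      eventually_nhdsWithin_of_forall (fun y hy => slope_bd x hx y hy)
    have hge : a ≤ derivWithin h (Set.Icc 0 1) x :=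
      ge_of_tendsto htend (hev.mono fun y hy => hy.1)
    have hle : derivWithin h (Set.Icc 0 1) x ≤ b :=
      le_of_tendsto htend (hev.mono fun y hy => hy.2)
    rcases hbad with hb | hb
    · exact absurd hge (not_le.mpr hb)
    · exact absurd hle (not_le.mpr hb)
  rw [hempty]
  exact MeasureTheory.measure_empty
end

section
/- For all real constants w, w' there exists x ∈ [0,1] such that |max(w, w' + x) − 2x| ≥ 1/2. Consequently, the family of functions {x ↦ max(w, w' + x) : w, w' ∈ ℝ} cannot uniformly approximate the continuous function h(x) = 2x on [0,1] to accuracy ε for any ε < 1/2. -/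
/-- every function of the form `x ↦ max(w, w' + x)` is at distance at
least `1/2` from `h(x) = 2x` somewhere on `[0,1]`; consequently this family cannot
uniformly approximate `h(x) = 2x` on `[0,1]` to accuracy `ε` for any `ε < 1/2`. -/
theorem stmt_9 :
    (∀ w w' : ℝ, ∃ x ∈ Set.Icc (0 : ℝ) 1, |max w (w' + x) - 2 * x| ≥ 1 / 2) ∧
    (∀ ε : ℝ, ε < 1 / 2 →
      ¬ ∃ w w' : ℝ, ∀ x ∈ Set.Icc (0 : ℝ) 1, |max w (w' + x) - 2 * x| < ε) := by
  have main : ∀ w w' : ℝ, ∃ x ∈ Set.Icc (0 : ℝ) 1, |max w (w' + x) - 2 * x| ≥ 1 / 2 := by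
    intro w w'
    by_cases h : (1:ℝ)/2 ≤ |max w (w' + 0) - 2 * 0|
    · exact ⟨0, by norm_num, h⟩
    · push_neg at h
      rw [abs_lt] at h
      refine ⟨1, by norm_num, ?_⟩
      have hw : w < 1/2 := lt_of_le_of_lt (le_max_left w (w' + 0)) (by linarith [h.2])
      have hle : w' + 0 ≤ max w (w' + 0) := le_max_right _ _
      have hw' : w' < 1/2 := by linarith [h.2]
      have : max w (w' + 1) < 3/2 := max_lt (by linarith) (by linarith)
      rw [abs_sub_comm, abs_of_nonneg (by linarith)]
      linarith
  refine ⟨main, fun ε hε ⟨w, w', hall⟩ => ?_⟩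
  obtain ⟨x, hx, hge⟩ := main w w'
  exact absurd (hall x hx) (not_lt.mpr (le_trans (by linarith) hge))
end

section
/- Let C be the smallest class of functions ℝ → ℝ that contains the identity function x ↦ x and is closed under the following operation: for any n ≥ 1, any f₁, …, fₙ ∈ C, any signs a₁, …, aₙ ∈ {−1, 1}, and any real parameters b, w₁, …, wₙ, the function x ↦ max(b, maxᵢ aᵢ·(wᵢ + fᵢ(x))) belongs to C. Then every f ∈ C is differentiable at all but finitely many points of ℝ, and at every point of differentiability f'(x) ∈ {−1, 0, 1}. -/
/-- The smallest class of functions `ℝ → ℝ` containing the identity and closed under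
forming, for any `n ≥ 1` (encoded as `n + 1`), functions `f₁, …, fₙ` in the class,
signs `a₁, …, aₙ ∈ {-1, 1}`, a bias `b`, and weights `w₁, …, wₙ`, the signed max-sum
node `x ↦ max(b, maxᵢ aᵢ · (wᵢ + fᵢ x))`. -/
inductive SignedMaxSumNet : (ℝ → ℝ) → Prop
  | id : SignedMaxSumNet (fun x => x)
  | layer (n : ℕ) (f : Fin (n + 1) → ℝ → ℝ) (a : Fin (n + 1) → ℝ)
      (ha : ∀ i, a i = -1 ∨ a i = 1) (w : Fin (n + 1) → ℝ) (b : ℝ)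
      (hf : ∀ i, SignedMaxSumNet (f i)) :
      SignedMaxSumNet (fun x =>
        max b (Finset.univ.sup' Finset.univ_nonempty (fun i => a i * (w i + f i x))))


def PW (f : ℝ → ℝ) : Prop :=
  ∃ s : Set ℝ, s.Finite ∧ ∀ x y : ℝ, x < y → Set.Ioo x y ∩ s = ∅ →
    ∃ m ∈ ({-1, 0, 1} : Set ℝ), ∀ z ∈ Set.Icc x y, f z = f x + m * (z - x)

lemma pw_id : PW (fun x => x) := by
  refine ⟨∅, Set.finite_empty, fun x y _ _ => ⟨1, by simp, fun z _ => by ring⟩⟩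

lemma pw_const (c : ℝ) : PW (fun _ => c) := by
  refine ⟨∅, Set.finite_empty, fun x y _ _ => ⟨0, by simp, fun z _ => by ring⟩⟩

lemma pw_affine_comp {f : ℝ → ℝ} (a w : ℝ) (ha : a = -1 ∨ a = 1) (hf : PW f) :
    PW (fun x => a * (w + f x)) := by
  obtain ⟨s, hs, H⟩ := hf
  refine ⟨s, hs, fun x y hxy hd => ?_⟩
  obtain ⟨m, hm, Hm⟩ := H x y hxy hd
  refine ⟨a * m, ?_, fun z hz => ?_⟩
  · simp only [Set.mem_insert_iff, Set.mem_singleton_iff] at hm ⊢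
    rcases ha with rfl | rfl <;> rcases hm with rfl | rfl | rfl <;> norm_num
  · beta_reduce; rw [Hm z hz]; ring

lemma pw_max {f g : ℝ → ℝ} (hf : PW f) (hg : PW g) : PW (fun x => max (f x) (g x)) := by
  classical
  obtain ⟨sf, hsf, Hf⟩ := hf
  obtain ⟨sg, hsg, Hg⟩ := hg
  set s0 : Set ℝ := sf ∪ sg with hs0def
  have hs0 : s0.Finite := hsf.union hsg
  set T : Set ℝ := {z | z ∉ s0 ∧ f z = g z ∧ ∀ δ > 0, ∃ y ∈ Set.Ioo z (z + δ), f y ≠ g y}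
    with hTdef
  -- two crossing points with no s0 point strictly between give a contradiction
  have key : ∀ t₁ t₂, t₁ ∈ T → t₂ ∈ T → t₁ < t₂ → Set.Ioo t₁ t₂ ∩ s0 = ∅ → False := by
    intro t₁ t₂ h₁ h₂ hlt hdis
    have hdf : Set.Ioo t₁ t₂ ∩ sf = ∅ := by
      rw [Set.eq_empty_iff_forall_notMem]; rintro v ⟨hv1, hv2⟩
      exact (Set.eq_empty_iff_forall_notMem.mp hdis) v ⟨hv1, Or.inl hv2⟩
    have hdg : Set.Ioo t₁ t₂ ∩ sg = ∅ := by
      rw [Set.eq_empty_iff_forall_notMem]; rintro v ⟨hv1, hv2⟩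
      exact (Set.eq_empty_iff_forall_notMem.mp hdis) v ⟨hv1, Or.inr hv2⟩
    obtain ⟨mf, _, Hfx⟩ := Hf t₁ t₂ hlt hdf
    obtain ⟨mg, _, Hgx⟩ := Hg t₁ t₂ hlt hdg
    have he1 : f t₁ = g t₁ := h₁.2.1
    have he2 : f t₂ = g t₂ := h₂.2.1
    have hf2 := Hfx t₂ ⟨le_of_lt hlt, le_refl _⟩
    have hg2 := Hgx t₂ ⟨le_of_lt hlt, le_refl _⟩
    have hmm : mf = mg := by
      have hne : t₂ - t₁ ≠ 0 := by intro h; nlinarith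
      have : mf * (t₂ - t₁) = mg * (t₂ - t₁) := by nlinarith
      exact mul_right_cancel₀ hne this
    obtain ⟨y, hy, hne⟩ := h₁.2.2 (t₂ - t₁) (by linarith)
    apply hne
    have hyI : y ∈ Set.Icc t₁ t₂ := by
      constructor <;> [exact le_of_lt hy.1; nlinarith [hy.2]]
    rw [Hfx y hyI, Hgx y hyI, he1, hmm]
  -- T is finite
  have hT : T.Finite := by
    set F : Finset ℝ := hs0.toFinset with hF
    set φ : ℝ → WithTop ℝ := fun t => (F.filter (fun v => t < v)).min with hφ
    have gap : ∀ t₁ t₂ : ℝ, t₁ < t₂ → φ t₁ = φ t₂ → Set.Ioo t₁ t₂ ∩ s0 = ∅ := by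
      intro t₁ t₂ hlt he
      rw [Set.eq_empty_iff_forall_notMem]
      rintro v ⟨hv1, hv2⟩
      have hvF : v ∈ F.filter (fun u => t₁ < u) := by
        simp only [Finset.mem_filter, hF, Set.Finite.mem_toFinset]
        exact ⟨hv2, hv1.1⟩
      have h1 : φ t₂ ≤ (v : WithTop ℝ) := by rw [← he]; exact Finset.min_le hvF
      cases h2 : (F.filter (fun u => t₂ < u)).min with
      | top =>
          simp only [hφ] at h1; rw [h2] at h1
          exact absurd h1 (by simp)
      | coe u =>
          have humem := Finset.mem_of_min h2
          have hu2 : t₂ < u := (Finset.mem_filter.mp humem).2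
          simp only [hφ] at h1; rw [h2] at h1
          have : u ≤ v := by exact_mod_cast h1
          have := hv1.2
          linarith
    have hinj : Set.InjOn φ T := by
      intro t₁ h₁ t₂ h₂ he
      by_contra hne
      rcases Ne.lt_or_gt hne with h | h
      · exact key t₁ t₂ h₁ h₂ h (gap t₁ t₂ h he)
      · exact key t₂ t₁ h₂ h₁ h (gap t₂ t₁ h he.symm)
    have himg : φ '' T ⊆ insert ⊤ ((fun r : ℝ => (r : WithTop ℝ)) '' ↑F) := by
      rintro _ ⟨t, _, rfl⟩
      cases h2 : (F.filter (fun u => t < u)).min with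
      | top => simp only [hφ]; rw [h2]; exact Set.mem_insert _ _
      | coe u =>
          right
          refine ⟨u, by simpa using (Finset.mem_filter.mp (Finset.mem_of_min h2)).1, ?_⟩
          simp only [hφ]; rw [h2]
    exact Set.Finite.of_finite_image
      (Set.Finite.subset ((F.finite_toSet.image _).insert ⊤) himg) hinj
  refine ⟨s0 ∪ T, hs0.union hT, ?_⟩
  intro x y hxy hdisj
  have hdf : Set.Ioo x y ∩ sf = ∅ := by
    rw [Set.eq_empty_iff_forall_notMem]; rintro v ⟨hv1, hv2⟩
    exact (Set.eq_empty_iff_forall_notMem.mp hdisj) v ⟨hv1, Or.inl (Or.inl hv2)⟩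
  have hdg : Set.Ioo x y ∩ sg = ∅ := by
    rw [Set.eq_empty_iff_forall_notMem]; rintro v ⟨hv1, hv2⟩
    exact (Set.eq_empty_iff_forall_notMem.mp hdisj) v ⟨hv1, Or.inl (Or.inr hv2)⟩
  obtain ⟨mf, hmf, Hfx⟩ := Hf x y hxy hdf
  obtain ⟨mg, hmg, Hgx⟩ := Hg x y hxy hdg
  have hdiff : ∀ z ∈ Set.Icc x y, f z - g z = (f x - g x) + (mf - mg) * (z - x) := by
    intro z hz; rw [Hfx z hz, Hgx z hz]; ring
  have hey : f y - g y = (f x - g x) + (mf - mg) * (y - x) :=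
    hdiff y ⟨le_of_lt hxy, le_refl y⟩
  -- Case A : both endpoints f ≥ g
  have caseA : g x ≤ f x → g y ≤ f y →
      ∃ m ∈ ({-1, 0, 1} : Set ℝ), ∀ z ∈ Set.Icc x y,
        (fun x => max (f x) (g x)) z = (fun x => max (f x) (g x)) x + m * (z - x) := by
    intro h1 h2
    refine ⟨mf, hmf, fun z hz => ?_⟩
    have hge : g z ≤ f z := by
      have h3 := hdiff z hz
      rcases le_or_gt 0 (mf - mg) with hd0 | hd0
      · nlinarith [mul_nonneg hd0 (sub_nonneg.mpr hz.1)]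
      · have h4 : (mf - mg) * (z - x) = (mf - mg) * (y - x) - (mf - mg) * (y - z) := by ring
        nlinarith [mul_nonneg (neg_nonneg.mpr (le_of_lt hd0)) (sub_nonneg.mpr hz.2)]
    beta_reduce
    rw [max_eq_left hge, max_eq_left h1, Hfx z hz]
  have caseB : f x ≤ g x → f y ≤ g y →
      ∃ m ∈ ({-1, 0, 1} : Set ℝ), ∀ z ∈ Set.Icc x y,
        (fun x => max (f x) (g x)) z = (fun x => max (f x) (g x)) x + m * (z - x) := by
    intro h1 h2
    refine ⟨mg, hmg, fun z hz => ?_⟩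
    have hge : f z ≤ g z := by
      have h3 := hdiff z hz
      rcases le_or_gt 0 (mf - mg) with hd0 | hd0
      · have h4 : (mf - mg) * (z - x) = (mf - mg) * (y - x) - (mf - mg) * (y - z) := by ring
        nlinarith [mul_nonneg hd0 (sub_nonneg.mpr hz.2)]
      · nlinarith [mul_nonneg (neg_nonneg.mpr (le_of_lt hd0)) (sub_nonneg.mpr hz.1)]
    beta_reduce
    rw [max_eq_right hge, max_eq_right h1, Hgx z hz]
  -- Case C : a strict sign change is impossible
  have caseC : (f x - g x) * (f y - g y) < 0 → False := by
    intro hsgn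
    set c : ℝ := f x - g x with hc
    set d : ℝ := mf - mg with hd
    rw [hey] at hsgn
    have hcne : c ≠ 0 := by intro h; rw [h] at hsgn; simp at hsgn
    have hdne : d ≠ 0 := by intro h; rw [h] at hsgn; nlinarith [mul_self_nonneg c]
    have hcd : c * d < 0 := by nlinarith [mul_self_nonneg c, sub_pos.mpr hxy]
    obtain ⟨z0, hz0⟩ : ∃ z0 : ℝ, z0 = x - c / d := ⟨_, rfl⟩
    have hz0x : x < z0 := by
      rcases mul_neg_iff.mp hcd with ⟨hc0, hd0⟩ | ⟨hc0, hd0⟩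
      · have : c / d < 0 := div_neg_of_pos_of_neg hc0 hd0
        rw [hz0]; linarith
      · have : c / d < 0 := div_neg_of_neg_of_pos hc0 hd0
        rw [hz0]; linarith
    have hz0y : z0 < y := by
      rcases mul_neg_iff.mp hcd with ⟨hc0, hd0⟩ | ⟨hc0, hd0⟩
      · have h3 : c / (-d) < y - x := (div_lt_iff₀ (by linarith)).mpr (by nlinarith)
        rw [div_neg] at h3
        rw [hz0]; linarith
      · have h3 : (-c) / d < y - x := (div_lt_iff₀ (by linarith)).mpr (by nlinarith)
        rw [neg_div] at h3
        rw [hz0]; linarith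
    have hIoo : z0 ∈ Set.Ioo x y := ⟨hz0x, hz0y⟩
    have hnotin : z0 ∉ s0 ∪ T := by
      intro h
      exact (Set.eq_empty_iff_forall_notMem.mp hdisj) _ ⟨hIoo, h⟩
    apply hnotin
    right
    refine ⟨fun h => hnotin (Or.inl h), ?_, ?_⟩
    · have h5 := hdiff z0 ⟨le_of_lt hz0x, le_of_lt hz0y⟩
      have h6 : d * (z0 - x) = -c := by
        rw [hz0]; field_simp; try ring
      have : f z0 - g z0 = 0 := by rw [h5, h6]; ring
      linarith
    · intro δ hδ
      obtain ⟨y', hy'⟩ : ∃ y' : ℝ, y' = min (z0 + δ / 2) ((z0 + y) / 2) := ⟨_, rfl⟩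
      have hy'1 : z0 < y' := by rw [hy']; exact lt_min (by linarith) (by linarith)
      have hy'2 : y' ≤ (z0 + y) / 2 := by rw [hy']; exact min_le_right _ _
      have hy'3 : y' < z0 + δ := by
        rw [hy']
        calc min (z0 + δ / 2) ((z0 + y) / 2) ≤ z0 + δ / 2 := min_le_left _ _
          _ < z0 + δ := by linarith
      refine ⟨y', ⟨hy'1, hy'3⟩, ?_⟩
      have hy'I : y' ∈ Set.Icc x y := ⟨by linarith, by linarith⟩
      have h5 := hdiff y' hy'I
      have h6 : c + d * (y' - x) = d * (y' - z0) := by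
        rw [hz0]; field_simp; try ring
      have h7 : f y' - g y' = d * (y' - z0) := by rw [h5]; exact h6
      intro h
      rw [h] at h7
      have : d * (y' - z0) ≠ 0 := mul_ne_zero hdne (by intro hh; nlinarith)
      exact this (by linarith)
  -- combine the cases
  rcases le_or_gt (g x) (f x) with h1 | h1 <;> rcases le_or_gt (g y) (f y) with h2 | h2
  · exact caseA h1 h2
  · rcases h1.eq_or_lt with heq | hlt'
    · exact caseB (le_of_eq heq.symm) (le_of_lt h2)
    · exact absurd (mul_neg_of_pos_of_neg (by linarith) (by linarith)) (fun h => caseC h)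
  · rcases h2.eq_or_lt with heq | hlt'
    · exact caseB (le_of_lt h1) (le_of_eq heq.symm)
    · exact absurd (mul_neg_of_neg_of_pos (by linarith) (by linarith)) (fun h => caseC h)
  · exact caseB (le_of_lt h1) (le_of_lt h2)

lemma pw_sup' {ι : Type*} (t : Finset ι) (ht : t.Nonempty) (F : ι → ℝ → ℝ)
    (hF : ∀ i, PW (F i)) : PW (fun x => t.sup' ht (fun i => F i x)) := by
  induction ht using Finset.Nonempty.cons_induction with
  | singleton i => simpa using hF i
  | cons i t hit htne ih =>
    have he : (fun x => (Finset.cons i t hit).sup' (Finset.cons_nonempty hit) fun j => F j x)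
        = fun x => max (F i x) (t.sup' htne fun j => F j x) := by
      funext x
      rw [Finset.sup'_cons]
    rw [he]
    exact pw_max (hF i) ih

lemma pw_of_net (f : ℝ → ℝ) (hf : SignedMaxSumNet f) : PW f := by
  induction hf with
  | id => exact pw_id
  | layer n F a ha w b hF ih =>
    exact pw_max (pw_const b)
      (pw_sup' Finset.univ Finset.univ_nonempty _
        (fun i => pw_affine_comp (a i) (w i) (ha i) (ih i)))

/-- every function computed by a signed max-sum network is differentiable
at all but finitely many points, and wherever it is differentiable its derivative lies
in `{-1, 0, 1}`. -/
theorem stmt_13 (f : ℝ → ℝ) (hf : SignedMaxSumNet f) :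
    (∃ s : Set ℝ, s.Finite ∧ ∀ x ∉ s, DifferentiableAt ℝ f x) ∧
    (∀ x : ℝ, DifferentiableAt ℝ f x → deriv f x ∈ ({-1, 0, 1} : Set ℝ)) := by
  obtain ⟨s, hs, H⟩ := pw_of_net f hf
  constructor
  · refine ⟨s, hs, ?_⟩
    intro x hx
    obtain ⟨δ, hδ, hball⟩ := Metric.isOpen_iff.mp hs.isClosed.isOpen_compl x hx
    have hlt : x - δ < x + δ := by linarith
    have hdisj : Set.Ioo (x - δ) (x + δ) ∩ s = ∅ := by
      rw [Set.eq_empty_iff_forall_notMem]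
      rintro v ⟨hv1, hv2⟩
      exact hball (by rw [Real.ball_eq_Ioo]; exact hv1) hv2
    obtain ⟨m, hm, Hm⟩ := H (x - δ) (x + δ) hlt hdisj
    have hg : HasDerivAt (fun z : ℝ => f (x - δ) + m * (z - (x - δ))) m x := by
      simpa using (((hasDerivAt_id x).sub_const (x - δ)).const_mul m).const_add (f (x - δ))
    have hev : f =ᶠ[nhds x] (fun z : ℝ => f (x - δ) + m * (z - (x - δ))) := by
      filter_upwards [Ioo_mem_nhds (show x - δ < x by linarith) (show x < x + δ by linarith)] with z hz
      exact Hm z ⟨le_of_lt hz.1, le_of_lt hz.2⟩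
    exact (hg.congr_of_eventuallyEq hev).differentiableAt
  · intro x hdx
    obtain ⟨δ, hδpos, hdisj⟩ : ∃ δ > 0, Set.Ioo x (x + δ) ∩ s = ∅ := by
      by_cases hne : (s ∩ Set.Ioi x).Nonempty
      · have hfin : (s ∩ Set.Ioi x).Finite := hs.inter_of_left _
        obtain ⟨u, hu⟩ := hne
        have hFne : hfin.toFinset.Nonempty := ⟨u, hfin.mem_toFinset.mpr hu⟩
        set u0 := hfin.toFinset.min' hFne with hu0
        have hu0m : u0 ∈ s ∩ Set.Ioi x := hfin.mem_toFinset.mp (hfin.toFinset.min'_mem hFne)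
        refine ⟨u0 - x, by simpa using hu0m.2, ?_⟩
        rw [Set.eq_empty_iff_forall_notMem]
        rintro v ⟨hv1, hv2⟩
        have : u0 ≤ v := hfin.toFinset.min'_le v (hfin.mem_toFinset.mpr ⟨hv2, hv1.1⟩)
        have := hv1.2
        linarith
      · refine ⟨1, one_pos, ?_⟩
        rw [Set.eq_empty_iff_forall_notMem]
        rintro v ⟨hv1, hv2⟩
        exact hne ⟨v, hv2, hv1.1⟩
    obtain ⟨m, hm, Hm⟩ := H x (x + δ) (by linarith) hdisj
    have hg : HasDerivWithinAt (fun z : ℝ => f x + m * (z - x)) m (Set.Ici x) x := by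
      have : HasDerivAt (fun z : ℝ => f x + m * (z - x)) m x := by
        simpa using (((hasDerivAt_id x).sub_const x).const_mul m).const_add (f x)
      exact this.hasDerivWithinAt
    have hev : f =ᶠ[nhdsWithin x (Set.Ici x)] (fun z : ℝ => f x + m * (z - x)) := by
      have hmem : Set.Ico x (x + δ) ∈ nhdsWithin x (Set.Ici x) := by
        rw [show Set.Ico x (x + δ) = Set.Iio (x + δ) ∩ Set.Ici x by
          ext v; simp [Set.mem_Ico, and_comm]]
        exact Filter.inter_mem (nhdsWithin_le_nhds (Iio_mem_nhds (by linarith)))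
          self_mem_nhdsWithin
      filter_upwards [hmem] with z hz
      exact Hm z ⟨hz.1, le_of_lt hz.2⟩
    have h2 : HasDerivWithinAt f m (Set.Ici x) x :=
      hg.congr_of_eventuallyEq hev (by simp)
    have h1 : HasDerivWithinAt f (deriv f x) (Set.Ici x) x :=
      hdx.hasDerivAt.hasDerivWithinAt
    have hu : UniqueDiffWithinAt ℝ (Set.Ici x) x := uniqueDiffOn_Ici x x Set.self_mem_Ici
    have : deriv f x = m := by
      rw [← h1.derivWithin hu, h2.derivWithin hu]
    rw [this]; exact hm
end

section
/- Let σ : ℝ → ℝ be differentiable with 0 ≤ σ'(x) ≤ 1 for all x. Let C be the smallest class of functions ℝ → ℝ that contains the identity function x ↦ x and is closed under the operation: for any n ≥ 1, any f₁, …, fₙ ∈ C, and any real parameters b, w₁, …, wₙ, the function x ↦ σ(ln(e^b + Σᵢ e^{wᵢ + fᵢ(x)})) belongs to C. Let N(x) = ln(e^{b₀} + Σᵢ e^{vᵢ + gᵢ(x)}) for any real b₀, v₁, …, vₘ and any g₁, …, gₘ ∈ C (a final layer without activation). Then N is differentiable and 0 ≤ N'(x) < 1 for all x ∈ ℝ.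 -/
/-- The smallest class of functions `ℝ → ℝ` containing the identity and closed under
forming, for any `n ≥ 1` (encoded as `n + 1`), functions `f₁, …, fₙ` in the class, a
bias `b`, and weights `w₁, …, wₙ`, the max*-sum node with activation `σ`:
`x ↦ σ(ln(e^b + Σᵢ e^{wᵢ + fᵢ x}))`. -/
inductive MaxStarNet (σ : ℝ → ℝ) : (ℝ → ℝ) → Prop
  | id : MaxStarNet σ (fun x => x)
  | layer (n : ℕ) (f : Fin (n + 1) → ℝ → ℝ) (w : Fin (n + 1) → ℝ) (b : ℝ)
      (hf : ∀ i, MaxStarNet σ (f i)) :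
      MaxStarNet σ (fun x =>
        σ (Real.log (Real.exp b + ∑ i, Real.exp (w i + f i x))))


lemma msn_pos (n : ℕ) (b : ℝ) (v : Fin (n+1) → ℝ) (g : Fin (n+1) → ℝ → ℝ) (x : ℝ) :
    0 < Real.exp b + ∑ i, Real.exp (v i + g i x) := by
  have : (0:ℝ) ≤ ∑ i, Real.exp (v i + g i x) :=
    Finset.sum_nonneg fun i _ => (Real.exp_pos _).le
  linarith [Real.exp_pos b]

lemma msn_hasDeriv (n : ℕ) (b : ℝ) (v : Fin (n+1) → ℝ) (g : Fin (n+1) → ℝ → ℝ)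
    (hd : ∀ i, Differentiable ℝ (g i)) (x : ℝ) :
    HasDerivAt (fun y => Real.log (Real.exp b + ∑ i, Real.exp (v i + g i y)))
      ((∑ i, Real.exp (v i + g i x) * deriv (g i) x) /
        (Real.exp b + ∑ i, Real.exp (v i + g i x))) x := by
  have hS : HasDerivAt (fun y => Real.exp b + ∑ i, Real.exp (v i + g i y))
      (∑ i, Real.exp (v i + g i x) * deriv (g i) x) x := by
    have hsum : HasDerivAt (fun y => ∑ i, Real.exp (v i + g i y))
        (∑ i, Real.exp (v i + g i x) * deriv (g i) x) x := by
      apply HasDerivAt.fun_sum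
      intro i _
      have h1 : HasDerivAt (fun y => v i + g i y) (deriv (g i) x) x := by
        simpa using ((hd i x).hasDerivAt).const_add (v i)
      simpa using h1.exp
    simpa using hsum.const_add (Real.exp b)
  exact hS.log (ne_of_gt (msn_pos n b v g x))

lemma msn_bounds (n : ℕ) (b : ℝ) (v : Fin (n+1) → ℝ) (g : Fin (n+1) → ℝ → ℝ)
    (hd : ∀ i, Differentiable ℝ (g i))
    (hlb : ∀ i x, 0 ≤ deriv (g i) x) (hub : ∀ i x, deriv (g i) x ≤ 1) (x : ℝ) :
    0 ≤ deriv (fun y => Real.log (Real.exp b + ∑ i, Real.exp (v i + g i y))) x ∧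
    deriv (fun y => Real.log (Real.exp b + ∑ i, Real.exp (v i + g i y))) x < 1 := by
  rw [(msn_hasDeriv n b v g hd x).deriv]
  have hpos := msn_pos n b v g x
  have hnum0 : 0 ≤ ∑ i, Real.exp (v i + g i x) * deriv (g i) x :=
    Finset.sum_nonneg fun i _ => mul_nonneg (Real.exp_pos _).le (hlb i x)
  have hnum1 : ∑ i, Real.exp (v i + g i x) * deriv (g i) x
      < Real.exp b + ∑ i, Real.exp (v i + g i x) := by
    have : ∑ i, Real.exp (v i + g i x) * deriv (g i) x ≤ ∑ i, Real.exp (v i + g i x) := by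
      apply Finset.sum_le_sum
      intro i _
      nlinarith [Real.exp_pos (v i + g i x), hub i x]
    linarith [Real.exp_pos b]
  exact ⟨div_nonneg hnum0 hpos.le, (div_lt_one hpos).mpr hnum1⟩

lemma msn_hidden (σ : ℝ → ℝ) (hσ : Differentiable ℝ σ)
    (hσ' : ∀ x : ℝ, 0 ≤ deriv σ x ∧ deriv σ x ≤ 1) :
    ∀ f, MaxStarNet σ f →
      Differentiable ℝ f ∧ ∀ x, 0 ≤ deriv f x ∧ deriv f x ≤ 1 := by
  intro f hf
  induction hf with
  | id => refine ⟨differentiable_id, fun x => ?_⟩; simp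
  | layer n f w b hf ih =>
    have hd : ∀ i, Differentiable ℝ (f i) := fun i => (ih i).1
    have hlb : ∀ i x, 0 ≤ deriv (f i) x := fun i x => ((ih i).2 x).1
    have hub : ∀ i x, deriv (f i) x ≤ 1 := fun i x => ((ih i).2 x).2
    have hN : ∀ x, HasDerivAt (fun y => Real.log (Real.exp b + ∑ i, Real.exp (w i + f i y)))
        ((∑ i, Real.exp (w i + f i x) * deriv (f i) x) /
          (Real.exp b + ∑ i, Real.exp (w i + f i x))) x :=
      msn_hasDeriv n b w f hd
    have hcomp : ∀ x, HasDerivAt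
        (fun y => σ (Real.log (Real.exp b + ∑ i, Real.exp (w i + f i y))))
        (deriv σ (Real.log (Real.exp b + ∑ i, Real.exp (w i + f i x))) *
          ((∑ i, Real.exp (w i + f i x) * deriv (f i) x) /
            (Real.exp b + ∑ i, Real.exp (w i + f i x)))) x := fun x =>
      ((hσ _).hasDerivAt.comp x (hN x))
    refine ⟨fun x => (hcomp x).differentiableAt, fun x => ?_⟩
    rw [(hcomp x).deriv]
    have hb := msn_bounds n b w f hd hlb hub x
    rw [(hN x).deriv] at hb
    have hs := hσ' (Real.log (Real.exp b + ∑ i, Real.exp (w i + f i x)))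
    constructor
    · exact mul_nonneg hs.1 hb.1
    · nlinarith [hs.1, hs.2, hb.1, hb.2]

/-- with a differentiable activation `σ` whose derivative lies in `[0,1]`,
the output `N(x) = ln(e^{b₀} + Σᵢ e^{vᵢ + gᵢ(x)})` of a max*-sum network (final layer
without activation, `gᵢ` hidden-layer functions of the network) is differentiable with
`0 ≤ N'(x) < 1` everywhere. -/
theorem stmt_16 (σ : ℝ → ℝ) (hσ : Differentiable ℝ σ)
    (hσ' : ∀ x : ℝ, 0 ≤ deriv σ x ∧ deriv σ x ≤ 1)
    (m : ℕ) (b₀ : ℝ) (v : Fin (m + 1) → ℝ) (g : Fin (m + 1) → ℝ → ℝ)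
    (hg : ∀ i, MaxStarNet σ (g i)) :
    Differentiable ℝ (fun x => Real.log (Real.exp b₀ + ∑ i, Real.exp (v i + g i x))) ∧
    ∀ x : ℝ,
      0 ≤ deriv (fun y => Real.log (Real.exp b₀ + ∑ i, Real.exp (v i + g i y))) x ∧
      deriv (fun y => Real.log (Real.exp b₀ + ∑ i, Real.exp (v i + g i y))) x < 1 := by
  have h := fun i => msn_hidden σ hσ hσ' (g i) (hg i)
  have hd : ∀ i, Differentiable ℝ (g i) := fun i => (h i).1
  refine ⟨fun x => (msn_hasDeriv m b₀ v g hd x).differentiableAt, fun x => ?_⟩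
  exact msn_bounds m b₀ v g hd (fun i x => ((h i).2 x).1) (fun i x => ((h i).2 x).2) x
end

section
/- Let σ : ℝ → ℝ be differentiable with 0 ≤ σ'(x) ≤ 1 for all x. Let n ≥ 1 and let b₀ and wᵢ, bᵢ, vᵢ for i ∈ {1,…,n} be real numbers. Define N₁(x) = ln(e^{b₀} + Σᵢ e^{wᵢ + σ(ln(e^{bᵢ} + e^{vᵢ + x}))}). Then N₁ is differentiable and 0 ≤ N₁'(x) < 1 for all x ∈ ℝ. -/
/-- with a differentiable activation `σ` whose derivative lies in `[0,1]`,
the one-hidden-layer max*-sum network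
`N₁(x) = ln(e^{b₀} + Σᵢ e^{wᵢ + σ(ln(e^{bᵢ} + e^{vᵢ + x}))})`
is differentiable with `0 ≤ N₁'(x) < 1` everywhere. -/
theorem stmt_17 (σ : ℝ → ℝ) (hσ : Differentiable ℝ σ)
    (hσ' : ∀ x : ℝ, 0 ≤ deriv σ x ∧ deriv σ x ≤ 1)
    (n : ℕ) (hn : 1 ≤ n) (b₀ : ℝ) (w bb v : Fin n → ℝ) :
    Differentiable ℝ (fun x => Real.log (Real.exp b₀ +
      ∑ i, Real.exp (w i + σ (Real.log (Real.exp (bb i) + Real.exp (v i + x)))))) ∧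
    ∀ x : ℝ,
      0 ≤ deriv (fun y => Real.log (Real.exp b₀ +
        ∑ i, Real.exp (w i + σ (Real.log (Real.exp (bb i) + Real.exp (v i + y)))))) x ∧
      deriv (fun y => Real.log (Real.exp b₀ +
        ∑ i, Real.exp (w i + σ (Real.log (Real.exp (bb i) + Real.exp (v i + y)))))) x < 1 := by
  have key : ∀ x : ℝ, ∃ D : ℝ, 0 ≤ D ∧ D < 1 ∧
      HasDerivAt (fun y => Real.log (Real.exp b₀ +
        ∑ i, Real.exp (w i + σ (Real.log (Real.exp (bb i) + Real.exp (v i + y)))))) D x := by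
    intro x
    have hterm : ∀ i : Fin n, ∃ d : ℝ, 0 ≤ d ∧
        d ≤ Real.exp (w i + σ (Real.log (Real.exp (bb i) + Real.exp (v i + x)))) ∧
        HasDerivAt (fun y => Real.exp (w i + σ (Real.log (Real.exp (bb i) +
          Real.exp (v i + y))))) d x := by
      intro i
      have hpos : 0 < Real.exp (bb i) + Real.exp (v i + x) := by positivity
      have h1 : HasDerivAt (fun y : ℝ => Real.exp (bb i) + Real.exp (v i + y))
          (Real.exp (v i + x)) x := by
        have := ((hasDerivAt_id x).const_add (v i)).exp
        simpa using this.const_add (Real.exp (bb i))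
      have h2 : HasDerivAt (fun y : ℝ => Real.log (Real.exp (bb i) + Real.exp (v i + y)))
          (Real.exp (v i + x) / (Real.exp (bb i) + Real.exp (v i + x))) x :=
        h1.log (ne_of_gt hpos)
      set g := Real.log (Real.exp (bb i) + Real.exp (v i + x))
      have h3 : HasDerivAt σ (deriv σ g) g := (hσ g).hasDerivAt
      have h4 := (h3.comp x h2).const_add (w i)
      have h5 := h4.exp
      refine ⟨_, ?_, ?_, h5⟩
      · have := (hσ' g).1
        positivity
      · have hg' : Real.exp (v i + x) / (Real.exp (bb i) + Real.exp (v i + x)) ≤ 1 := by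
          rw [div_le_one hpos]
          nlinarith [Real.exp_pos (bb i)]
        have hσ1 := (hσ' g).2
        have hσ0 := (hσ' g).1
        have hg0 : 0 ≤ Real.exp (v i + x) / (Real.exp (bb i) + Real.exp (v i + x)) := by
          positivity
        calc Real.exp (w i + σ g) * (deriv σ g *
              (Real.exp (v i + x) / (Real.exp (bb i) + Real.exp (v i + x))))
            ≤ Real.exp (w i + σ g) * (1 * 1) := by
              apply mul_le_mul_of_nonneg_left _ (Real.exp_pos _).le
              simpa using mul_le_one₀ hσ1 hg0 hg'
          _ = Real.exp (w i + σ g) := by ring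
    choose d hd0 hdle hder using hterm
    have hsum : HasDerivAt (fun y => ∑ i, Real.exp (w i + σ (Real.log (Real.exp (bb i) +
        Real.exp (v i + y))))) (∑ i, d i) x :=
      HasDerivAt.fun_sum fun i _ => hder i
    set S := Real.exp b₀ + ∑ i, Real.exp (w i + σ (Real.log (Real.exp (bb i) +
        Real.exp (v i + x)))) with hS
    have hSpos : 0 < S := by
      have : 0 ≤ ∑ i, Real.exp (w i + σ (Real.log (Real.exp (bb i) + Real.exp (v i + x)))) :=
        Finset.sum_nonneg fun i _ => (Real.exp_pos _).le
      have := Real.exp_pos b₀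
      linarith
    have hlog : HasDerivAt (fun y => Real.log (Real.exp b₀ +
        ∑ i, Real.exp (w i + σ (Real.log (Real.exp (bb i) + Real.exp (v i + y))))))
        ((∑ i, d i) / S) x := (hsum.const_add (Real.exp b₀)).log (ne_of_gt hSpos)
    refine ⟨_, ?_, ?_, hlog⟩
    · apply div_nonneg _ hSpos.le
      exact Finset.sum_nonneg fun i _ => hd0 i
    · rw [div_lt_one hSpos]
      have : (∑ i, d i) ≤ ∑ i, Real.exp (w i + σ (Real.log (Real.exp (bb i) +
          Real.exp (v i + x)))) := Finset.sum_le_sum fun i _ => hdle i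
      have := Real.exp_pos b₀
      linarith
  constructor
  · intro x
    obtain ⟨D, _, _, hD⟩ := key x
    exact hD.differentiableAt
  · intro x
    obtain ⟨D, h0, h1, hD⟩ := key x
    rw [hD.deriv]
    exact ⟨h0, h1⟩
end

section
/- Let σ : ℝ → ℝ be differentiable with 0 ≤ σ'(x) ≤ 1 for all x. Let n ≥ 1, let b₀ and w₁, …, wₙ be real numbers, let x ∈ ℝ, and let g₁, …, gₙ : ℝ → ℝ be differentiable at x with 0 ≤ gᵢ'(x) < 1 for all i. Define N(y) = ln(e^{b₀} + Σᵢ e^{wᵢ + σ(gᵢ(y))}). Then N is differentiable at x and 0 ≤ N'(x) < 1. -/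
/-- inductive step. With a differentiable activation `σ` whose derivative
lies in `[0,1]`, if `g₁, …, gₙ` are differentiable at `x` with `0 ≤ gᵢ'(x) < 1`, then
`N(y) = ln(e^{b₀} + Σᵢ e^{wᵢ + σ(gᵢ(y))})` is differentiable at `x` with
`0 ≤ N'(x) < 1`. -/
theorem stmt_18 (σ : ℝ → ℝ) (hσ : Differentiable ℝ σ)
    (hσ' : ∀ y : ℝ, 0 ≤ deriv σ y ∧ deriv σ y ≤ 1)
    (n : ℕ) (hn : 1 ≤ n) (b₀ : ℝ) (w : Fin n → ℝ) (x : ℝ) (g : Fin n → ℝ → ℝ)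
    (hg : ∀ i, DifferentiableAt ℝ (g i) x)
    (hg' : ∀ i, 0 ≤ deriv (g i) x ∧ deriv (g i) x < 1) :
    DifferentiableAt ℝ
      (fun y => Real.log (Real.exp b₀ + ∑ i, Real.exp (w i + σ (g i y)))) x ∧
    0 ≤ deriv (fun y => Real.log (Real.exp b₀ + ∑ i, Real.exp (w i + σ (g i y)))) x ∧
    deriv (fun y => Real.log (Real.exp b₀ + ∑ i, Real.exp (w i + σ (g i y)))) x < 1 := by
  set D : ℝ := ∑ i, Real.exp (w i + σ (g i x)) * (deriv σ (g i x) * deriv (g i) x) with hD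
  set S : ℝ := Real.exp b₀ + ∑ i, Real.exp (w i + σ (g i x)) with hSdef
  have hS : 0 < S := by
    apply lt_of_lt_of_le (Real.exp_pos b₀)
    simp only [hSdef, le_add_iff_nonneg_right]
    exact Finset.sum_nonneg fun i _ => (Real.exp_pos _).le
  have hterm : ∀ i : Fin n, HasDerivAt (fun y => Real.exp (w i + σ (g i y)))
      (Real.exp (w i + σ (g i x)) * (deriv σ (g i x) * deriv (g i) x)) x := by
    intro i
    have h1 : HasDerivAt (fun y => σ (g i y)) (deriv σ (g i x) * deriv (g i) x) x :=
      ((hσ (g i x)).hasDerivAt).comp x (hg i).hasDerivAt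
    exact (h1.const_add (w i)).exp
  have hsum : HasDerivAt (fun y => Real.exp b₀ + ∑ i, Real.exp (w i + σ (g i y))) D x := by
    have := HasDerivAt.fun_sum (fun i (_ : i ∈ Finset.univ) => hterm i)
    exact this.const_add (Real.exp b₀)
  have hN : HasDerivAt (fun y => Real.log (Real.exp b₀ + ∑ i, Real.exp (w i + σ (g i y))))
      (D / S) x := hsum.log hS.ne'
  have hDnn : 0 ≤ D :=
    Finset.sum_nonneg fun i _ => mul_nonneg (Real.exp_pos _).le
      (mul_nonneg (hσ' (g i x)).1 (hg' i).1)
  have hDlt : D < S := by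
    have h1 : D < ∑ i, Real.exp (w i + σ (g i x)) := by
      apply Finset.sum_lt_sum_of_nonempty
      · exact Finset.univ_nonempty_iff.mpr ⟨⟨0, hn⟩⟩
      · intro i _
        have h2 : deriv σ (g i x) * deriv (g i) x < 1 :=
          lt_of_le_of_lt (by nlinarith [(hσ' (g i x)).2, (hg' i).1, (hg' i).2] :
            deriv σ (g i x) * deriv (g i) x ≤ deriv (g i) x) (hg' i).2
        nlinarith [Real.exp_pos (w i + σ (g i x))]
    have : (0:ℝ) < Real.exp b₀ := Real.exp_pos _
    simp only [hSdef]; linarith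
  refine ⟨hN.differentiableAt, ?_, ?_⟩
  · rw [hN.deriv]; exact div_nonneg hDnn hS.le
  · rw [hN.deriv]; exact (div_lt_one hS).mpr hDlt
end

section
/- Let f : ℝ → ℝ be differentiable on [0,1] with 0 ≤ f'(x) < 1 for all x ∈ [0,1]. Then there exists x ∈ [0,1] such that |f(x) − 2x| ≥ 1/2. Consequently, no family of functions whose members all have derivative in [0,1) on [0,1] can uniformly approximate the continuous function h(x) = 2x on [0,1] to accuracy ε for any ε < 1/2. -/
lemma key (f : ℝ → ℝ) (hf : DifferentiableOn ℝ f (Set.Icc 0 1))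
    (hd : ∀ x ∈ Set.Icc (0 : ℝ) 1,
      0 ≤ derivWithin f (Set.Icc 0 1) x ∧ derivWithin f (Set.Icc 0 1) x < 1) :
    ∃ x ∈ Set.Icc (0 : ℝ) 1, |f x - 2 * x| ≥ 1 / 2 := by
  have hconv : Convex ℝ (Set.Icc (0 : ℝ) 1) := convex_Icc 0 1
  have hbound : ∀ x ∈ Set.Icc (0 : ℝ) 1, ‖derivWithin f (Set.Icc 0 1) x‖ ≤ 1 := by
    intro x hx
    rcases hd x hx with ⟨h0, h1⟩
    rw [Real.norm_eq_abs, abs_of_nonneg h0]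
    exact h1.le
  have h01 : (0 : ℝ) ∈ Set.Icc (0 : ℝ) 1 := by norm_num
  have h11 : (1 : ℝ) ∈ Set.Icc (0 : ℝ) 1 := by norm_num
  have := hconv.norm_image_sub_le_of_norm_derivWithin_le hf hbound h01 h11
  simp only [Real.norm_eq_abs] at this
  by_contra h
  push_neg at h
  have h0 := h 0 h01
  have h1 := h 1 h11
  rw [abs_lt] at h0 h1
  rw [abs_le] at this
  norm_num at h0 h1 this
  linarith [h0.1, h0.2, h1.1, h1.2, this.1, this.2]

/-- any `f` differentiable on `[0,1]` with derivative in `[0,1)` on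
`[0,1]` is at distance at least `1/2` from `h(x) = 2x` somewhere on `[0,1]`;
consequently no family of such functions can uniformly approximate `h(x) = 2x` on
`[0,1]` to accuracy `ε` for any `ε < 1/2`. -/
theorem stmt_19 :
    (∀ f : ℝ → ℝ, DifferentiableOn ℝ f (Set.Icc 0 1) →
      (∀ x ∈ Set.Icc (0 : ℝ) 1,
        0 ≤ derivWithin f (Set.Icc 0 1) x ∧ derivWithin f (Set.Icc 0 1) x < 1) →
      ∃ x ∈ Set.Icc (0 : ℝ) 1, |f x - 2 * x| ≥ 1 / 2) ∧
    (∀ ε : ℝ, ε < 1 / 2 →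
      ¬ ∃ f : ℝ → ℝ, DifferentiableOn ℝ f (Set.Icc 0 1) ∧
        (∀ x ∈ Set.Icc (0 : ℝ) 1,
          0 ≤ derivWithin f (Set.Icc 0 1) x ∧ derivWithin f (Set.Icc 0 1) x < 1) ∧
        (∀ x ∈ Set.Icc (0 : ℝ) 1, |f x - 2 * x| < ε)) := by
  refine ⟨key, ?_⟩
  rintro ε hε ⟨f, hf, hd, happ⟩
  obtain ⟨x, hx, hge⟩ := key f hf hd
  exact absurd (happ x hx) (by linarith)
end
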